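/- arXiv:1401.5268 — 2 statements merged into one kernel-verified Lean document; each statement's English description precedes it below -/
import Mathlib

section
/- Let λ_max > 0, ε > 0, and suppose λ* ∈ (-λ_max, λ_max) satisfies λ*² = λ_max(λ_max - 1/(2ε)) with λ* > 0. Then the roots ξ of ξ² + ξ - 4ε²λ*(1 - (λ*/λ_max)²) = 0 are real and of opposite sign (the folded singularity at λ* is a folded saddle). -/
/-!
The constant term `-4ε²λ(1 - (λ/λ_max)²)` is negative because `0 < λ < λ_max`, so the discriminant
is positive and the two real roots, whose product is that constant term, have opposite signs.
-/

lemma exists_roots_neg_pos_of_quadratic {b c : ℝ} (hc : 0 < c) :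
    ∃ ξ₁ ξ₂ : ℝ, ξ₁ < 0 ∧ 0 < ξ₂ ∧ ∀ ξ : ℝ, ξ ^ 2 + b * ξ - c = 0 ↔ (ξ = ξ₁ ∨ ξ = ξ₂) := by
  set s := √(b ^ 2 + 4 * c)
  have hs : s ^ 2 = b ^ 2 + 4 * c := Real.sq_sqrt (by positivity)
  have hb : |b| < s := by
    rw [Real.lt_sqrt (abs_nonneg b), sq_abs]
    linarith
  have hdiscrim : discrim 1 b (-c) = s * s := by rw [discrim, ← sq, hs]; ring
  refine ⟨(-b - s) / 2, (-b + s) / 2, by linarith [neg_abs_le b],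
    by linarith [le_abs_self b], fun ξ => ?_⟩
  have := quadratic_eq_zero_iff one_ne_zero hdiscrim ξ
  rw [one_mul, ← sub_eq_add_neg, mul_one, ← sq] at this
  rw [this, or_comm]

lemma one_sub_div_sq_pos_of_abs_lt {x y : ℝ} (h : |x| < y) : 0 < 1 - (x / y) ^ 2 := by
  have hy : 0 < y := (abs_nonneg x).trans_lt h
  rw [sub_pos, div_pow, div_lt_one (by positivity), sq_lt_sq, abs_of_pos hy]
  exact h

theorem stmt4_general (lm ε l : ℝ) (hε : 0 < ε)
    (hl1 : -lm < l) (hl2 : l < lm) (hpos : 0 < l) :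
    ∃ ξ₁ ξ₂ : ℝ, ξ₁ < 0 ∧ 0 < ξ₂ ∧
      ∀ ξ : ℝ, ξ ^ 2 + ξ - 4 * ε ^ 2 * l * (1 - (l / lm) ^ 2) = 0 ↔
        (ξ = ξ₁ ∨ ξ = ξ₂) := by
  have hfactor := one_sub_div_sq_pos_of_abs_lt (abs_lt.2 ⟨hl1, hl2⟩)
  simpa only [one_mul] using
    exists_roots_neg_pos_of_quadratic (b := 1) (c := 4 * ε ^ 2 * l * (1 - (l / lm) ^ 2))
      (by positivity)

/-- If λ* ∈ (-λ_max, λ_max), λ* > 0 and λ*² = λ_max(λ_max - 1/(2ε)), the roots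
    of ξ² + ξ - 4ε²λ*(1-(λ*/λ_max)²) = 0 are real with opposite signs
    (folded saddle). -/
theorem stmt4 (lm ε l : ℝ) (hlm : 0 < lm) (hε : 0 < ε)
    (hl1 : -lm < l) (hl2 : l < lm) (hpos : 0 < l)
    (hroot : l ^ 2 = lm * (lm - 1 / (2 * ε))) :
    ∃ ξ₁ ξ₂ : ℝ, ξ₁ < 0 ∧ 0 < ξ₂ ∧
      ∀ ξ : ℝ, ξ ^ 2 + ξ - 4 * ε ^ 2 * l * (1 - (l / lm) ^ 2) = 0 ↔
        (ξ = ξ₁ ∨ ξ = ξ₂) :=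
  stmt4_general lm ε l hε hl1 hl2 hpos
end

section
/- Let λ_max > 0. The value ε* = (2 + √(4 + λ_max²))/(8λ_max) satisfies ε* > 1/(2λ_max), and at ε = ε* the negative root λ* = -√(λ_max(λ_max - 1/(2ε*))) of the folded-singularity condition makes the discriminant 1 + 16ε*²λ*(1 - (λ*/λ_max)²) equal to zero (the folded node becomes a folded focus). -/
/-!
On the folded-singularity curve `λ² = λ_max (λ_max - 1/(2ε))` one has `1 - (λ/λ_max)² = 1/(2ελ_max)`,
so the discriminant `1 + 16ε²λ(1 - (λ/λ_max)²)` collapses to `1 + 8ελ/λ_max` and vanishes exactly at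
`λ = -λ_max/(8ε)`. This point lies on the curve iff `64 λ_max ε² - 32 ε - λ_max = 0`, whose positive
root is `ε* = (2 + √(4 + λ_max²))/(8λ_max)`; and `ε* > 1/(2λ_max)` because `√(4 + λ_max²) > 2`.
-/

open Real

noncomputable def foldedFocusEps (lm : ℝ) : ℝ := (2 + √(4 + lm ^ 2)) / (8 * lm)

noncomputable def negFoldedSingularity (lm ε : ℝ) : ℝ := -√(lm * (lm - 1 / (2 * ε)))

noncomputable def foldedDiscriminant (lm ε l : ℝ) : ℝ := 1 + 16 * ε ^ 2 * l * (1 - (l / lm) ^ 2)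

variable {lm ε l : ℝ}

theorem foldedDiscriminant_eq_of_sq_eq (hlm : lm ≠ 0) (hε : ε ≠ 0)
    (hl : l ^ 2 = lm * (lm - 1 / (2 * ε))) :
    foldedDiscriminant lm ε l = 1 + 8 * ε * l / lm := by
  rw [foldedDiscriminant, div_pow, hl]
  field_simp
  ring

theorem foldedFocusEps_quadratic (hlm : lm ≠ 0) :
    64 * lm * foldedFocusEps lm ^ 2 - 32 * foldedFocusEps lm - lm = 0 := by
  have hs : √(4 + lm ^ 2) ^ 2 = 4 + lm ^ 2 := sq_sqrt (by positivity)
  rw [foldedFocusEps]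
  field_simp
  linear_combination 64 * hs

theorem one_div_two_mul_lt_foldedFocusEps (hlm : 0 < lm) : 1 / (2 * lm) < foldedFocusEps lm := by
  have hs : 2 < √(4 + lm ^ 2) := by
    rw [show (2 : ℝ) = √(2 ^ 2) by simp]
    exact sqrt_lt_sqrt (by positivity) (by nlinarith)
  rw [foldedFocusEps, div_lt_div_iff₀ (by positivity) (by positivity)]
  nlinarith

theorem div_eight_mul_sq_eq_of_quadratic (hε : ε ≠ 0) (hq : 64 * lm * ε ^ 2 - 32 * ε - lm = 0) :
    (lm / (8 * ε)) ^ 2 = lm * (lm - 1 / (2 * ε)) := by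
  field_simp
  linear_combination -2 * lm * hq

theorem negFoldedSingularity_eq_of_quadratic (hlm : 0 ≤ lm) (hε : 0 < ε)
    (hq : 64 * lm * ε ^ 2 - 32 * ε - lm = 0) :
    negFoldedSingularity lm ε = -(lm / (8 * ε)) := by
  rw [negFoldedSingularity, ← div_eight_mul_sq_eq_of_quadratic hε.ne' hq, sqrt_sq (by positivity)]

theorem foldedDiscriminant_foldedFocusEps (hlm : 0 < lm) :
    foldedDiscriminant lm (foldedFocusEps lm) (negFoldedSingularity lm (foldedFocusEps lm)) = 0 := by
  have hε : 0 < foldedFocusEps lm := (one_div_two_mul_lt_foldedFocusEps hlm).trans' (by positivity)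
  have hq := foldedFocusEps_quadratic hlm.ne'
  rw [negFoldedSingularity_eq_of_quadratic hlm.le hε hq, foldedDiscriminant_eq_of_sq_eq hlm.ne' hε.ne'
    (by rw [neg_sq, div_eight_mul_sq_eq_of_quadratic hε.ne' hq])]
  field_simp
  ring

/-- At ε* = (2 + √(4+λ_max²))/(8λ_max) > 1/(2λ_max), the negative folded
    singularity λ* = -√(λ_max(λ_max - 1/(2ε*))) makes the discriminant
    1 + 16ε*²λ*(1-(λ*/λ_max)²) vanish: the folded node becomes a folded
    focus. -/
theorem stmt8 (lm : ℝ) (hlm : 0 < lm) :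
    1 / (2 * lm) < (2 + Real.sqrt (4 + lm ^ 2)) / (8 * lm) ∧
    (1 + 16 * ((2 + Real.sqrt (4 + lm ^ 2)) / (8 * lm)) ^ 2 *
        (-Real.sqrt (lm * (lm - 1 / (2 * ((2 + Real.sqrt (4 + lm ^ 2)) / (8 * lm)))))) *
        (1 - ((-Real.sqrt (lm * (lm - 1 / (2 * ((2 + Real.sqrt (4 + lm ^ 2)) / (8 * lm)))))) / lm) ^ 2)
      = 0) :=
  ⟨one_div_two_mul_lt_foldedFocusEps hlm, foldedDiscriminant_foldedFocusEps hlm⟩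
end
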